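/- arXiv:2411.19607 — 2 statements merged into one kernel-verified Lean document; each statement's English description precedes it below -/
import Mathlib

section
/- (Lemma 4: multi-obstacle safety and monotonicity.) Assume the obstacles satisfy ‖q_i − q_j‖ > Δ_i + Δ_j for all i ≠ j and each activation radius satisfies Δ_i < λ_i < min_{j ≠ i}(‖q_i − q_j‖ − Δ_j). Let ξ : [0,∞) → ℝ^p be continuously differentiable with ξ'(t) = μ(ξ(t)) for all t ≥ 0 and ξ(0) = ξ_0 satisfying ‖ξ_0 − q_i‖ ≥ Δ_i for all i ∈ {1,…,N}. Then ‖ξ(t) − q_i‖ ≥ Δ_i for all i and all t ≥ 0, and the map t ↦ ‖ξ(t)‖ is nonincreasing. -/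
/-
The feedback never points away from the origin: `⟪ξ, ν_s ξ⟫ = -‖ξ‖² / s_c ≤ 0` and
`⟪ξ, π(z) ν_s ξ⟫ = -‖π(z) ξ‖² / s_c ≤ 0`, so `‖ξ(t)‖²` is nonincreasing.

In the closed safety ball of obstacle `i` every other obstacle is beyond its activation radius,
so its avoidance term is switched off. The avoidance term of obstacle `i` is orthogonal to
`ξ - q_i`, and the stabilizing term either points away from `q_i` (when `⟪ξ, ξ - q_i⟫ ≤ 0`) or is
switched off by `α_s^i = 0`. Hence `‖ξ(t) - q_i‖²` cannot decrease while `ξ(t)` is in the ball,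
and a barrier argument keeps `‖ξ(t) - q_i‖ ≥ Δ_i`.
-/

open scoped RealInnerProductSpace
open Classical

noncomputable def sc (c r : ℝ) : ℝ :=
  if r ≤ c then c ^ ((2:ℝ)/3) * r ^ ((1:ℝ)/3) else r

noncomputable def nuS (c : ℝ) {p : ℕ} (ξ : EuclideanSpace ℝ (Fin p)) :
    EuclideanSpace ℝ (Fin p) :=
  if ξ = 0 then 0 else (-(sc c ‖ξ‖)⁻¹) • ξ

noncomputable def proj {p : ℕ} (z v : EuclideanSpace ℝ (Fin p)) :
    EuclideanSpace ℝ (Fin p) :=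
  v - (⟪z, v⟫ / ‖z‖ ^ 2) • z

noncomputable def nuA (c : ℝ) {p : ℕ} (q ξ : EuclideanSpace ℝ (Fin p)) :
    EuclideanSpace ℝ (Fin p) :=
  proj (ξ - q) (nuS c ξ)

noncomputable def sigmaQ {p : ℕ} (q ξ : EuclideanSpace ℝ (Fin p)) : ℝ :=
  max 0 (min (⟪ξ, ξ - q⟫ + 1) 1)

noncomputable def alphaS {p : ℕ} (q : EuclideanSpace ℝ (Fin p)) (Δ lam : ℝ)
    (ξ : EuclideanSpace ℝ (Fin p)) : ℝ :=
  max 0 (min ((‖ξ - q‖ - Δ * sigmaQ q ξ) / (lam - Δ)) 1)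

noncomputable def alphaA {p : ℕ} (q : EuclideanSpace ℝ (Fin p)) (Δ lam : ℝ)
    (ξ : EuclideanSpace ℝ (Fin p)) : ℝ :=
  sigmaQ q ξ * (1 - alphaS q Δ lam ξ)

noncomputable def mu (c : ℝ) {p : ℕ} (q : EuclideanSpace ℝ (Fin p)) (Δ lam : ℝ)
    (ξ : EuclideanSpace ℝ (Fin p)) : EuclideanSpace ℝ (Fin p) :=
  alphaS q Δ lam ξ • nuS c ξ + alphaA q Δ lam ξ • nuA c q ξ

noncomputable def muMulti (c : ℝ) {p N : ℕ} (q : Fin N → EuclideanSpace ℝ (Fin p))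
    (Δ lam : Fin N → ℝ) (ξ : EuclideanSpace ℝ (Fin p)) : EuclideanSpace ℝ (Fin p) :=
  (∏ i, alphaS (q i) (Δ i) (lam i) ξ) • nuS c ξ
    + ∑ i, alphaA (q i) (Δ i) (lam i) ξ • nuA c (q i) ξ

theorem le_image_of_deriv_right_nonneg_of_lt {f f' : ℝ → ℝ} {a b c : ℝ}
    (hf : ContinuousOn f (Set.Icc a b))
    (hf' : ∀ x ∈ Set.Ico a b, HasDerivWithinAt f (f' x) (Set.Ici x) x)
    (ha : c ≤ f a) (bound : ∀ x ∈ Set.Ico a b, f x < c → 0 ≤ f' x) :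
    ∀ ⦃x⦄, x ∈ Set.Icc a b → c ≤ f x := by
  intro x hx
  refine le_of_forall_pos_le_add fun ε hε => ?_
  -- a fence of positive slope turns the weak boundary condition into the strict one
  obtain ⟨k, hk, hkx⟩ : ∃ k, 0 < k ∧ k * (x - a + 1) ≤ ε := by
    have hab : 0 < b - a + 1 := by linarith [hx.1.trans hx.2]
    refine ⟨ε / (b - a + 1), div_pos hε hab, ?_⟩
    rw [div_mul_eq_mul_div, div_le_iff₀ hab]
    nlinarith [hx.2]
  have hfence := image_le_of_deriv_right_lt_deriv_boundary (f := fun t => -f t)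
    (B := fun t => -c + k * (t - a + 1)) (B' := fun _ => k) hf.neg
    (fun t ht => (hf' t ht).neg) (by linarith)
    (fun t => (((hasDerivAt_id t).sub_const a).add_const 1 |>.const_mul k |>.const_add _)
      |>.congr_deriv (by simp))
    (fun t ht heq => by
      have : f t < c := by nlinarith [ht.1]
      linarith [bound t ht this]) hx
  linarith [show -f x ≤ -c + k * (x - a + 1) from hfence]

section Feedback

variable {p : ℕ}

theorem sc_nonneg (c : ℝ) {r : ℝ} (hr : 0 ≤ r) : 0 ≤ sc c r := by
  unfold sc
  split_ifs with h
  · exact mul_nonneg (Real.rpow_nonneg (hr.trans h) _) (Real.rpow_nonneg hr _)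
  · exact hr

theorem nuS_eq_smul (c : ℝ) (ξ : EuclideanSpace ℝ (Fin p)) :
    nuS c ξ = (-(sc c ‖ξ‖)⁻¹) • ξ := by
  unfold nuS
  split_ifs with h
  · rw [h, smul_zero]
  · rfl

theorem proj_smul (z v : EuclideanSpace ℝ (Fin p)) (a : ℝ) :
    proj z (a • v) = a • proj z v := by
  simp only [proj, inner_smul_right, smul_sub, smul_smul, mul_div_assoc]

theorem inner_proj_eq_zero (z v : EuclideanSpace ℝ (Fin p)) : ⟪z, proj z v⟫ = 0 := by
  rcases eq_or_ne z 0 with rfl | hz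
  · exact inner_zero_left _
  · rw [proj, inner_sub_right, inner_smul_right, real_inner_self_eq_norm_sq,
      div_mul_cancel₀ _ (pow_ne_zero 2 (norm_ne_zero_iff.mpr hz)), sub_self]

theorem inner_proj_nonneg (z v : EuclideanSpace ℝ (Fin p)) : 0 ≤ ⟪v, proj z v⟫ := by
  have hv : v = proj z v + (⟪z, v⟫ / ‖z‖ ^ 2) • z := (sub_add_cancel _ _).symm
  have : ⟪v, proj z v⟫ = ⟪proj z v, proj z v⟫ := by
    nth_rw 1 [hv]
    rw [inner_add_left, inner_smul_left, inner_proj_eq_zero, mul_zero, add_zero]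
  rw [this]
  exact real_inner_self_nonneg

theorem inner_self_nuS_nonpos (c : ℝ) (ξ : EuclideanSpace ℝ (Fin p)) : ⟪ξ, nuS c ξ⟫ ≤ 0 := by
  rw [nuS_eq_smul, inner_smul_right, neg_mul]
  exact neg_nonpos.mpr (mul_nonneg (inv_nonneg.mpr (sc_nonneg c (norm_nonneg ξ)))
    real_inner_self_nonneg)

theorem inner_self_nuA_nonpos (c : ℝ) (q ξ : EuclideanSpace ℝ (Fin p)) :
    ⟪ξ, nuA c q ξ⟫ ≤ 0 := by
  rw [nuA, nuS_eq_smul, proj_smul, inner_smul_right, neg_mul]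
  exact neg_nonpos.mpr (mul_nonneg (inv_nonneg.mpr (sc_nonneg c (norm_nonneg ξ)))
    (inner_proj_nonneg _ _))

end Feedback

section Weights

variable {p : ℕ} {q ξ : EuclideanSpace ℝ (Fin p)} {Δ lam : ℝ}

theorem sigmaQ_eq_one (h : 0 ≤ ⟪ξ, ξ - q⟫) : sigmaQ q ξ = 1 := by
  rw [sigmaQ, min_eq_right (by linarith), max_eq_right zero_le_one]

theorem alphaS_nonneg : 0 ≤ alphaS q Δ lam ξ := le_max_left _ _

theorem alphaA_nonneg : 0 ≤ alphaA q Δ lam ξ :=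
  mul_nonneg (le_max_left _ _) (sub_nonneg.mpr (max_le zero_le_one (min_le_right _ _)))

theorem alphaS_eq_zero (hlam : Δ < lam) (hσ : sigmaQ q ξ = 1) (h : ‖ξ - q‖ ≤ Δ) :
    alphaS q Δ lam ξ = 0 := by
  have : (‖ξ - q‖ - Δ * sigmaQ q ξ) / (lam - Δ) ≤ 0 :=
    div_nonpos_of_nonpos_of_nonneg (by rw [hσ]; linarith) (by linarith)
  exact max_eq_left ((min_le_left _ _).trans this)

theorem alphaS_eq_one (hΔ : 0 ≤ Δ) (hlam : Δ < lam) (h : lam ≤ ‖ξ - q‖) :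
    alphaS q Δ lam ξ = 1 := by
  have hσ : Δ * sigmaQ q ξ ≤ Δ :=
    mul_le_of_le_one_right hΔ (max_le zero_le_one (min_le_right _ _))
  have : 1 ≤ (‖ξ - q‖ - Δ * sigmaQ q ξ) / (lam - Δ) := by
    rw [le_div_iff₀ (sub_pos.mpr hlam)]
    linarith
  rw [alphaS, min_eq_right this, max_eq_right zero_le_one]

theorem alphaA_eq_zero_of_alphaS_eq_one (h : alphaS q Δ lam ξ = 1) : alphaA q Δ lam ξ = 0 := by
  rw [alphaA, h, sub_self, mul_zero]

end Weights

theorem inner_self_muMulti_nonpos (c : ℝ) {p N : ℕ} (q : Fin N → EuclideanSpace ℝ (Fin p))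
    (Δ lam : Fin N → ℝ) (ξ : EuclideanSpace ℝ (Fin p)) : ⟪ξ, muMulti c q Δ lam ξ⟫ ≤ 0 := by
  rw [muMulti, inner_add_right, inner_smul_right, inner_sum]
  refine add_nonpos (mul_nonpos_of_nonneg_of_nonpos
    (Finset.prod_nonneg fun i _ => alphaS_nonneg) (inner_self_nuS_nonpos c ξ)) ?_
  refine Finset.sum_nonpos fun i _ => ?_
  rw [inner_smul_right]
  exact mul_nonpos_of_nonneg_of_nonpos alphaA_nonneg (inner_self_nuA_nonpos c _ ξ)

theorem inner_sub_muMulti_nonneg (c : ℝ) {p N : ℕ} {q : Fin N → EuclideanSpace ℝ (Fin p)}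
    {Δ lam : Fin N → ℝ} (hΔ : ∀ i, 0 < Δ i) (hlam₁ : ∀ i, Δ i < lam i)
    (hlam₂ : ∀ i j, j ≠ i → lam i < ‖q i - q j‖ - Δ j)
    {i : Fin N} {ξ : EuclideanSpace ℝ (Fin p)} (hnear : ‖ξ - q i‖ ≤ Δ i) :
    0 ≤ ⟪ξ - q i, muMulti c q Δ lam ξ⟫ := by
  have hfar : ∀ j ≠ i, alphaA (q j) (Δ j) (lam j) ξ = 0 := by
    intro j hji
    refine alphaA_eq_zero_of_alphaS_eq_one (alphaS_eq_one (hΔ j).le (hlam₁ j) ?_)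
    have := norm_sub_le_norm_sub_add_norm_sub (q j) ξ (q i)
    rw [norm_sub_rev (q j) ξ] at this
    linarith [hlam₂ j i hji.symm]
  have hsum : ∑ j, ⟪ξ - q i, alphaA (q j) (Δ j) (lam j) ξ • nuA c (q j) ξ⟫ = 0 := by
    refine Finset.sum_eq_zero fun j _ => ?_
    rw [inner_smul_right]
    rcases eq_or_ne j i with rfl | hji
    · rw [nuA, inner_proj_eq_zero, mul_zero]
    · rw [hfar j hji, zero_mul]
  rw [muMulti, inner_add_right, inner_sum, hsum, add_zero, inner_smul_right]
  rcases le_or_gt ⟪ξ, ξ - q i⟫ 0 with hin | hin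
  · refine mul_nonneg (Finset.prod_nonneg fun j _ => alphaS_nonneg) ?_
    rw [nuS_eq_smul, inner_smul_right, real_inner_comm, neg_mul]
    exact neg_nonneg.mpr (mul_nonpos_of_nonneg_of_nonpos
      (inv_nonneg.mpr (sc_nonneg c (norm_nonneg ξ))) hin)
  · rw [Finset.prod_eq_zero (Finset.mem_univ i)
      (alphaS_eq_zero (hlam₁ i) (sigmaQ_eq_one hin.le) hnear), zero_mul]

theorem stmt12_general (p N : ℕ) (c : ℝ)
    (q : Fin N → EuclideanSpace ℝ (Fin p)) (Δ lam : Fin N → ℝ)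
    (hΔ : ∀ i, 0 < Δ i)
    (hlam₁ : ∀ i, Δ i < lam i)
    (hlam₂ : ∀ i j, j ≠ i → lam i < ‖q i - q j‖ - Δ j)
    (ξ : ℝ → EuclideanSpace ℝ (Fin p)) (ξ₀ : EuclideanSpace ℝ (Fin p))
    (hinit : ξ 0 = ξ₀) (hsafe0 : ∀ i, Δ i ≤ ‖ξ₀ - q i‖)
    (hode : ∀ t ∈ Set.Ici (0:ℝ), HasDerivAt ξ (muMulti c q Δ lam (ξ t)) t) :
    (∀ i, ∀ t ∈ Set.Ici (0:ℝ), Δ i ≤ ‖ξ t - q i‖) ∧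
    AntitoneOn (fun t => ‖ξ t‖) (Set.Ici (0:ℝ)) := by
  have hdist (z : EuclideanSpace ℝ (Fin p)) (t : ℝ) (ht : t ∈ Set.Ici 0) :
      HasDerivAt (fun t => ‖ξ t - z‖ ^ 2) (2 * ⟪ξ t - z, muMulti c q Δ lam (ξ t)⟫) t :=
    ((hode t ht).sub_const z).norm_sq
  constructor
  · intro i t ht
    have hsq : Δ i ^ 2 ≤ ‖ξ t - q i‖ ^ 2 := by
      refine le_image_of_deriv_right_nonneg_of_lt (a := 0)
        (fun s hs => (hdist (q i) s hs.1).continuousAt.continuousWithinAt)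
        (fun s hs => (hdist (q i) s hs.1).hasDerivWithinAt)
        (by rw [hinit]; exact pow_le_pow_left₀ (hΔ i).le (hsafe0 i) 2)
        (fun s hs hlt => ?_) ⟨ht, le_rfl⟩
      have hnear : ‖ξ s - q i‖ ≤ Δ i :=
        (pow_le_pow_iff_left₀ (norm_nonneg _) (hΔ i).le two_ne_zero).mp hlt.le
      exact mul_nonneg zero_le_two (inner_sub_muMulti_nonneg c hΔ hlam₁ hlam₂ hnear)
    exact (pow_le_pow_iff_left₀ (hΔ i).le (norm_nonneg _) two_ne_zero).mp hsq
  · have hsq : AntitoneOn (fun t => ‖ξ t - 0‖ ^ 2) (Set.Ici 0) := by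
      refine antitoneOn_of_hasDerivWithinAt_nonpos (convex_Ici 0)
        (fun t ht => (hdist 0 t ht).continuousAt.continuousWithinAt)
        (fun t ht => (hdist 0 t (interior_subset ht)).hasDerivWithinAt) fun t ht => ?_
      rw [sub_zero]
      exact mul_nonpos_of_nonneg_of_nonpos zero_le_two (inner_self_muMulti_nonpos c q Δ lam _)
    intro s hs t ht hst
    simpa only [sub_zero, pow_le_pow_iff_left₀ (norm_nonneg _) (norm_nonneg _) two_ne_zero]
      using hsq hs ht hst

theorem stmt12 (p N : ℕ) (hp : 1 ≤ p) (c : ℝ) (hc : 0 < c)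
    (q : Fin N → EuclideanSpace ℝ (Fin p)) (Δ lam : Fin N → ℝ)
    (hΔ : ∀ i, 0 < Δ i)
    (hsep : ∀ i j, i ≠ j → Δ i + Δ j < ‖q i - q j‖)
    (hlam₁ : ∀ i, Δ i < lam i)
    (hlam₂ : ∀ i j, j ≠ i → lam i < ‖q i - q j‖ - Δ j)
    (ξ : ℝ → EuclideanSpace ℝ (Fin p)) (ξ₀ : EuclideanSpace ℝ (Fin p))
    (hinit : ξ 0 = ξ₀) (hsafe0 : ∀ i, Δ i ≤ ‖ξ₀ - q i‖)
    (hode : ∀ t ∈ Set.Ici (0:ℝ), HasDerivAt ξ (muMulti c q Δ lam (ξ t)) t)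
    (hderiv_cont : ContinuousOn (fun t => muMulti c q Δ lam (ξ t)) (Set.Ici (0:ℝ))) :
    (∀ i, ∀ t ∈ Set.Ici (0:ℝ), Δ i ≤ ‖ξ t - q i‖) ∧
    AntitoneOn (fun t => ‖ξ t‖) (Set.Ici (0:ℝ)) :=
  stmt12_general p N c q Δ lam hΔ hlam₁ hlam₂ ξ ξ₀ hinit hsafe0 hode
end

section
/- (Regularity of the multi-obstacle feedback.) The multi-obstacle feedback μ is continuous on ℝ^p \ {q_1,…,q_N} and locally Lipschitz continuous on ℝ^p \ ({q_1,…,q_N} ∪ {0}). -/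
/-! The feedback factors as `μ ξ = Φ (ξ, ν_s ξ)` with the blending map
`Φ (ξ, v) = (∏ α_s^i ξ) • v + ∑ α_a^i ξ • π (ξ - q_i) v`. The gains `σ^i`, `α_s^i`, `α_a^i` are
clamps to `[0, 1]` of locally Lipschitz expressions, hence locally Lipschitz everywhere, and
`(z, v) ↦ π z v` is smooth for `z ≠ 0`; so `Φ` is locally Lipschitz at every `(ξ, v)` with `ξ`
off the centres. Away from `0`, `ν_s ξ = -ξ / max (c^{2/3} ‖ξ‖^{1/3}) ‖ξ‖` is locally Lipschitz,
and near `0` it has norm `c^{-2/3} ‖ξ‖^{2/3} → 0`, which gives continuity (only) at the origin. -/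

open scoped RealInnerProductSpace
open Classical

open Filter Topology

section LocallyLipschitzAt

variable {α β γ : Type*} [PseudoEMetricSpace α] [PseudoEMetricSpace β] [PseudoEMetricSpace γ]

def LocallyLipschitzAt (f : α → β) (x : α) : Prop :=
  ∃ K : NNReal, ∃ t ∈ 𝓝 x, LipschitzOnWith K f t

theorem LocallyLipschitzAt.continuousAt {f : α → β} {x : α} (hf : LocallyLipschitzAt f x) :
    ContinuousAt f x := by
  obtain ⟨K, t, ht, hft⟩ := hf
  exact hft.continuousOn.continuousAt ht

theorem LipschitzWith.locallyLipschitzAt {K : NNReal} {f : α → β} (hf : LipschitzWith K f)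
    (x : α) : LocallyLipschitzAt f x :=
  ⟨K, Set.univ, univ_mem, hf.lipschitzOnWith⟩

theorem LocallyLipschitzAt.comp {g : β → γ} {f : α → β} {x : α}
    (hg : LocallyLipschitzAt g (f x)) (hf : LocallyLipschitzAt f x) :
    LocallyLipschitzAt (fun y => g (f y)) x := by
  have hfx := hf.continuousAt
  obtain ⟨Kg, s, hs, hgs⟩ := hg
  obtain ⟨Kf, t, ht, hft⟩ := hf
  exact ⟨Kg * Kf, t ∩ f ⁻¹' s, inter_mem ht (hfx hs),
    hgs.comp (hft.mono Set.inter_subset_left) fun _ hy => hy.2⟩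

theorem LocallyLipschitzAt.prodMk {f : α → β} {g : α → γ} {x : α}
    (hf : LocallyLipschitzAt f x) (hg : LocallyLipschitzAt g x) :
    LocallyLipschitzAt (fun y => (f y, g y)) x := by
  obtain ⟨Kf, s, hs, hfs⟩ := hf
  obtain ⟨Kg, t, ht, hgt⟩ := hg
  exact ⟨max Kf Kg, s ∩ t, inter_mem hs ht,
    (hfs.mono Set.inter_subset_left).prodMk (hgt.mono Set.inter_subset_right)⟩

theorem LocallyLipschitzAt.max {f g : α → ℝ} {x : α}
    (hf : LocallyLipschitzAt f x) (hg : LocallyLipschitzAt g x) :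
    LocallyLipschitzAt (fun y => max (f y) (g y)) x :=
  (lipschitzWith_max.locallyLipschitzAt _).comp (hf.prodMk hg)

variable {E F : Type*} [NormedAddCommGroup E] [NormedSpace ℝ E]
  [NormedAddCommGroup F] [NormedSpace ℝ F]

theorem ContDiffAt.locallyLipschitzAt {f : E → F} {x : E} (hf : ContDiffAt ℝ 1 f x) :
    LocallyLipschitzAt f x :=
  hf.exists_lipschitzOnWith

theorem LocallyLipschitzAt.add {f g : α → F} {x : α}
    (hf : LocallyLipschitzAt f x) (hg : LocallyLipschitzAt g x) :
    LocallyLipschitzAt (fun y => f y + g y) x :=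
  contDiff_add.contDiffAt.locallyLipschitzAt.comp (hf.prodMk hg)

theorem LocallyLipschitzAt.smul {f : α → ℝ} {g : α → F} {x : α}
    (hf : LocallyLipschitzAt f x) (hg : LocallyLipschitzAt g x) :
    LocallyLipschitzAt (fun y => f y • g y) x :=
  contDiff_smul.contDiffAt.locallyLipschitzAt.comp (hf.prodMk hg)

theorem LocallyLipschitzAt.mul {f g : α → ℝ} {x : α}
    (hf : LocallyLipschitzAt f x) (hg : LocallyLipschitzAt g x) :
    LocallyLipschitzAt (fun y => f y * g y) x :=
  hf.smul hg

theorem locallyLipschitzAt_finset_sum {ι : Type*} {s : Finset ι} {f : ι → α → F} {x : α}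
    (h : ∀ i ∈ s, LocallyLipschitzAt (f i) x) :
    LocallyLipschitzAt (fun y => ∑ i ∈ s, f i y) x := by
  induction s using Finset.cons_induction with
  | empty => simpa using (LipschitzWith.const (0 : F)).locallyLipschitzAt x
  | cons a s _ ih =>
    simp only [Finset.sum_cons]
    exact (h a (Finset.mem_cons_self a s)).add (ih fun i hi => h i (Finset.mem_cons_of_mem hi))

theorem locallyLipschitzAt_finset_prod {ι : Type*} {s : Finset ι} {f : ι → α → ℝ} {x : α}
    (h : ∀ i ∈ s, LocallyLipschitzAt (f i) x) :
    LocallyLipschitzAt (fun y => ∏ i ∈ s, f i y) x := by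
  induction s using Finset.cons_induction with
  | empty => simpa using (LipschitzWith.const (1 : ℝ)).locallyLipschitzAt x
  | cons a s _ ih =>
    simp only [Finset.prod_cons]
    exact (h a (Finset.mem_cons_self a s)).mul (ih fun i hi => h i (Finset.mem_cons_of_mem hi))

end LocallyLipschitzAt

theorem sc_eq_max {c r : ℝ} (hc : 0 < c) (hr : 0 ≤ r) :
    sc c r = max (c ^ ((2:ℝ)/3) * r ^ ((1:ℝ)/3)) r := by
  have hsplit : r = r ^ ((2:ℝ)/3) * r ^ ((1:ℝ)/3) := by
    rw [← Real.rpow_add' hr (by norm_num)]; norm_num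
  unfold sc
  split_ifs with hrc
  · refine (max_eq_left ?_).symm
    calc r = r ^ ((2:ℝ)/3) * r ^ ((1:ℝ)/3) := hsplit
      _ ≤ c ^ ((2:ℝ)/3) * r ^ ((1:ℝ)/3) := by gcongr
  · refine (max_eq_right ?_).symm
    calc c ^ ((2:ℝ)/3) * r ^ ((1:ℝ)/3) ≤ r ^ ((2:ℝ)/3) * r ^ ((1:ℝ)/3) := by
          gcongr; linarith
      _ = r := hsplit.symm

theorem sc_pos {c r : ℝ} (hc : 0 < c) (hr : 0 < r) : 0 < sc c r :=
  hr.trans_le ((sc_eq_max hc hr.le).symm ▸ le_max_right _ _)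

theorem lipschitzWith_max_zero_min_one : LipschitzWith 1 (fun t : ℝ => max 0 (min t 1)) := by
  simpa using (LipschitzWith.id.min_const 1).const_max 0

section Euclidean

variable {p : ℕ}

local notation "E" => EuclideanSpace ℝ (Fin p)

theorem nuS_eq (c : ℝ) (ξ : E) : nuS c ξ = (-(sc c ‖ξ‖)⁻¹) • ξ := by
  unfold nuS
  split_ifs with h
  · simp [h]
  · rfl

theorem norm_nuS_of_norm_le {c : ℝ} (hc : 0 < c) {ξ : E} (hξ : ‖ξ‖ ≤ c) :
    ‖nuS c ξ‖ = ‖ξ‖ ^ ((2:ℝ)/3) / c ^ ((2:ℝ)/3) := by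
  rcases eq_or_ne ξ 0 with rfl | h
  · simp [nuS]
  have hn : 0 < ‖ξ‖ := norm_pos_iff.2 h
  have hsplit : ‖ξ‖ = ‖ξ‖ ^ ((2:ℝ)/3) * ‖ξ‖ ^ ((1:ℝ)/3) := by
    rw [← Real.rpow_add hn]; norm_num
  have : 0 < ‖ξ‖ ^ ((1:ℝ)/3) := by positivity
  rw [nuS_eq, norm_smul, norm_neg, norm_inv, Real.norm_of_nonneg (sc_pos hc hn).le, sc, if_pos hξ]
  field_simp
  linear_combination hsplit

theorem continuousAt_nuS_zero {c : ℝ} (hc : 0 < c) : ContinuousAt (nuS c) (0 : E) := by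
  have h0 : nuS c (0 : E) = 0 := by simp [nuS]
  rw [ContinuousAt, h0, tendsto_zero_iff_norm_tendsto_zero]
  have hcont : Continuous (fun ξ : E => ‖ξ‖ ^ ((2:ℝ)/3) / c ^ ((2:ℝ)/3)) := by
    fun_prop (disch := norm_num)
  have hbound : Tendsto (fun ξ : E => ‖ξ‖ ^ ((2:ℝ)/3) / c ^ ((2:ℝ)/3)) (𝓝 0) (𝓝 0) := by
    simpa using hcont.tendsto 0
  refine hbound.congr' ?_
  filter_upwards [Metric.closedBall_mem_nhds (0 : E) hc] with ξ hξ
  exact (norm_nuS_of_norm_le hc (mem_closedBall_zero_iff.1 hξ)).symm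

theorem locallyLipschitzAt_nuS {c : ℝ} (hc : 0 < c) {ξ : E} (hξ : ξ ≠ 0) :
    LocallyLipschitzAt (nuS c) ξ := by
  have hn : 0 < ‖ξ‖ := norm_pos_iff.2 hξ
  have hnorm : ContDiffAt ℝ 1 (fun ζ : E => ‖ζ‖) ξ := contDiffAt_norm ℝ hξ
  have hsc : LocallyLipschitzAt (fun ζ : E => sc c ‖ζ‖) ξ := by
    simp only [sc_eq_max hc (norm_nonneg _)]
    exact (contDiffAt_const.mul ((Real.contDiffAt_rpow_const_of_ne hn.ne').comp ξ hnorm)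
      ).locallyLipschitzAt.max hnorm.locallyLipschitzAt
  rw [show nuS c = fun ζ : E => (-(sc c ‖ζ‖)⁻¹) • ζ from funext (nuS_eq c)]
  exact ((contDiffAt_inv ℝ (sc_pos hc hn).ne').neg.locallyLipschitzAt.comp
    (f := fun ζ : E => sc c ‖ζ‖) hsc).smul
    (LipschitzWith.id.locallyLipschitzAt ξ)

theorem continuousAt_nuS {c : ℝ} (hc : 0 < c) (ξ : E) : ContinuousAt (nuS c) ξ := by
  rcases eq_or_ne ξ 0 with rfl | h
  · exact continuousAt_nuS_zero hc
  · exact (locallyLipschitzAt_nuS hc h).continuousAt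

theorem contDiffAt_proj {n : WithTop ℕ∞} {z v : E} (hz : z ≠ 0) :
    ContDiffAt ℝ n (fun x : E × E => proj x.1 x.2) (z, v) := by
  have hden : ‖z‖ ^ 2 ≠ 0 := by positivity
  unfold proj
  exact contDiffAt_snd.sub (((contDiffAt_fst.inner ℝ contDiffAt_snd).div
    (contDiffAt_fst.norm_sq ℝ) hden).smul contDiffAt_fst)

theorem locallyLipschitzAt_sigmaQ (q ξ : E) : LocallyLipschitzAt (sigmaQ q) ξ :=
  (lipschitzWith_max_zero_min_one.locallyLipschitzAt _).comp
    ((contDiffAt_id.inner ℝ (contDiffAt_id.sub contDiffAt_const)).add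
      contDiffAt_const).locallyLipschitzAt

theorem locallyLipschitzAt_alphaS (q : E) (Δ lam : ℝ) (ξ : E) :
    LocallyLipschitzAt (alphaS q Δ lam) ξ := by
  have hdist : LocallyLipschitzAt (fun ζ : E => ‖ζ - q‖) ξ := by
    simpa only [dist_eq_norm] using (LipschitzWith.dist_left q).locallyLipschitzAt ξ
  have hcomb : ContDiff ℝ 1 (fun x : ℝ × ℝ => (x.1 - Δ * x.2) / (lam - Δ)) := by fun_prop
  exact (lipschitzWith_max_zero_min_one.locallyLipschitzAt _).comp
    (hcomb.contDiffAt.locallyLipschitzAt.comp (hdist.prodMk (locallyLipschitzAt_sigmaQ q ξ)))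

theorem locallyLipschitzAt_alphaA (q : E) (Δ lam : ℝ) (ξ : E) :
    LocallyLipschitzAt (alphaA q Δ lam) ξ := by
  have hcomb : ContDiff ℝ 1 (fun x : ℝ × ℝ => x.1 * (1 - x.2)) := by fun_prop
  exact hcomb.contDiffAt.locallyLipschitzAt.comp
    ((locallyLipschitzAt_sigmaQ q ξ).prodMk (locallyLipschitzAt_alphaS q Δ lam ξ))

noncomputable def blend {N : ℕ} (q : Fin N → E) (Δ lam : Fin N → ℝ) (x : E × E) : E :=
  (∏ i, alphaS (q i) (Δ i) (lam i) x.1) • x.2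
    + ∑ i, alphaA (q i) (Δ i) (lam i) x.1 • proj (x.1 - q i) x.2

theorem muMulti_eq_blend (c : ℝ) {N : ℕ} (q : Fin N → E) (Δ lam : Fin N → ℝ) (ξ : E) :
    muMulti c q Δ lam ξ = blend q Δ lam (ξ, nuS c ξ) :=
  rfl

theorem locallyLipschitzAt_blend {N : ℕ} (q : Fin N → E) (Δ lam : Fin N → ℝ) {x : E × E}
    (hx : ∀ i, x.1 ≠ q i) : LocallyLipschitzAt (blend q Δ lam) x := by
  have hfst {f : E → ℝ} (hf : LocallyLipschitzAt f x.1) :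
      LocallyLipschitzAt (fun y : E × E => f y.1) x :=
    hf.comp (LipschitzWith.prod_fst.locallyLipschitzAt x)
  have hproj (i : Fin N) : ContDiffAt ℝ 1 (fun y : E × E => proj (y.1 - q i) y.2) x :=
    (contDiffAt_proj (v := x.2) (sub_ne_zero.2 (hx i))).comp
      (f := fun y : E × E => (y.1 - q i, y.2)) x
      ((contDiffAt_fst.sub contDiffAt_const).prodMk contDiffAt_snd)
  have hstab : LocallyLipschitzAt
      (fun y : E × E => (∏ i, alphaS (q i) (Δ i) (lam i) y.1) • y.2) x :=
    (locallyLipschitzAt_finset_prod fun i _ => hfst (locallyLipschitzAt_alphaS _ _ _ _)).smul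
      (LipschitzWith.prod_snd.locallyLipschitzAt x)
  have havoid : LocallyLipschitzAt
      (fun y : E × E => ∑ i, alphaA (q i) (Δ i) (lam i) y.1 • proj (y.1 - q i) y.2) x :=
    locallyLipschitzAt_finset_sum fun i _ =>
      (hfst (locallyLipschitzAt_alphaA _ _ _ _)).smul (hproj i).locallyLipschitzAt
  exact hstab.add havoid

end Euclidean

theorem stmt15_general (p N : ℕ) (c : ℝ) (hc : 0 < c)
    (q : Fin N → EuclideanSpace ℝ (Fin p)) (Δ lam : Fin N → ℝ) :
    ContinuousOn (fun ξ => muMulti c q Δ lam ξ)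
      ((Set.range q)ᶜ : Set (EuclideanSpace ℝ (Fin p))) ∧
    (∀ ξ : EuclideanSpace ℝ (Fin p), (∀ i, ξ ≠ q i) → ξ ≠ 0 →
      ∃ K : NNReal, ∃ t ∈ nhds ξ, LipschitzOnWith K (fun ξ' => muMulti c q Δ lam ξ') t) := by
  simp only [muMulti_eq_blend]
  refine ⟨fun ξ hξ => ContinuousAt.continuousWithinAt ?_, fun ξ hq hξ => ?_⟩
  · have hq : ∀ i, ξ ≠ q i := fun i h => hξ ⟨i, h.symm⟩
    exact (locallyLipschitzAt_blend q Δ lam hq).continuousAt.comp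
      (continuousAt_id.prodMk (continuousAt_nuS hc ξ))
  · exact (locallyLipschitzAt_blend q Δ lam hq).comp
      ((LipschitzWith.id.locallyLipschitzAt ξ).prodMk (locallyLipschitzAt_nuS hc hξ))

theorem stmt15 (p N : ℕ) (hp : 1 ≤ p) (c : ℝ) (hc : 0 < c)
    (q : Fin N → EuclideanSpace ℝ (Fin p)) (Δ lam : Fin N → ℝ)
    (hΔ : ∀ i, 0 < Δ i) (hlam : ∀ i, Δ i < lam i) :
    ContinuousOn (fun ξ => muMulti c q Δ lam ξ)
      ((Set.range q)ᶜ : Set (EuclideanSpace ℝ (Fin p))) ∧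
    (∀ ξ : EuclideanSpace ℝ (Fin p), (∀ i, ξ ≠ q i) → ξ ≠ 0 →
      ∃ K : NNReal, ∃ t ∈ nhds ξ, LipschitzOnWith K (fun ξ' => muMulti c q Δ lam ξ') t) :=
  stmt15_general p N c hc q Δ lam
end
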